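/- arXiv:1712.05063 — 3 statements merged into one kernel-verified Lean document; each statement's English description precedes it below -/
import Mathlib

section
/- (Conditional mean of a Gaussian vector given a linear threshold.) Let X be a random vector in ℝ^p with the multivariate normal distribution N(0, Σ), where Σ is positive definite. Let c ∈ ℝ^p be nonzero, set γ = (cᵀ Σ c)^{1/2}, and let s ∈ ℝ. Then P(cᵀX > s) = 1 − Φ(s/γ) > 0 and E[X | cᵀX > s] = φ(s/γ) / ((1 − Φ(s/γ)) γ) · Σ c, where φ and Φ are the standard normal density and cumulative distribution function, and E[X | A] denotes the expectation of X under the conditional probability measure given the event A. -/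
open MeasureTheory ProbabilityTheory Matrix

/-- A random vector `X` is centered multivariate Gaussian `N(0, Σ)` iff every linear
functional `cᵀX` is a centered real Gaussian with variance `cᵀ Σ c`. -/
def IsCenteredGaussianVector {Ω : Type*} [MeasurableSpace Ω] (μ : Measure Ω)
    {p : ℕ} (X : Ω → Fin p → ℝ) (S : Matrix (Fin p) (Fin p) ℝ) : Prop :=
  ∀ c : Fin p → ℝ,
    Measure.map (fun ω => ∑ i, c i * X ω i) μ =
      gaussianReal 0 (Real.toNNReal (c ⬝ᵥ S.mulVec c))

/-- The standard normal probability density function `φ`. -/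
noncomputable def stdNormalPDF (u : ℝ) : ℝ :=
  (Real.sqrt (2 * Real.pi))⁻¹ * Real.exp (-u ^ 2 / 2)

/-- The standard normal cumulative distribution function `Φ`. -/
noncomputable def stdNormalCDF (u : ℝ) : ℝ :=
  ∫ t in Set.Iic u, stdNormalPDF t

/-!
Put `T = cᵀX`. For each coordinate, `Xᵢ - β T` with `β = (Σc)ᵢ / cᵀΣc` is uncorrelated with `T`;
as the pair is jointly Gaussian it is independent of `T` and centered, so
`E[Xᵢ; T > s] = β E[T; T > s]`. Standardizing, `U = T / γ ~ N(0, 1)`, so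
`P(T > s) = 1 - Φ(s/γ)`, and `E[U; U > s/γ] = φ(s/γ)` because `-φ` is a primitive of `u φ(u)`.
-/

open Real Set Filter Topology

lemma stdNormalPDF_eq_gaussianPDFReal : stdNormalPDF = gaussianPDFReal 0 1 := by
  ext x
  simp [stdNormalPDF, gaussianPDFReal]

lemma one_sub_stdNormalCDF (t : ℝ) : 1 - stdNormalCDF t = ∫ x in Ioi t, stdNormalPDF x := by
  have hint : Integrable stdNormalPDF := by
    rw [stdNormalPDF_eq_gaussianPDFReal]; exact integrable_gaussianPDFReal 0 1
  rw [← integral_gaussianPDFReal_eq_one 0 one_ne_zero, ← stdNormalPDF_eq_gaussianPDFReal,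
    ← intervalIntegral.integral_Iic_add_Ioi hint.integrableOn hint.integrableOn, stdNormalCDF,
    add_sub_cancel_left]

lemma gaussianReal_Ioi (t : ℝ) :
    gaussianReal 0 1 (Ioi t) = ENNReal.ofReal (1 - stdNormalCDF t) := by
  rw [gaussianReal_apply_eq_integral 0 one_ne_zero, one_sub_stdNormalCDF,
    stdNormalPDF_eq_gaussianPDFReal]

lemma one_sub_stdNormalCDF_pos (t : ℝ) : 0 < 1 - stdNormalCDF t := by
  have h : gaussianReal 0 1 (Ioi t) ≠ 0 := fun h ↦ by
    simpa using gaussianReal_absolutelyContinuous' 0 one_ne_zero h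
  simpa [gaussianReal_Ioi] using h

lemma hasDerivAt_stdNormalPDF (x : ℝ) : HasDerivAt stdNormalPDF (-x * stdNormalPDF x) x := by
  have h : HasDerivAt (fun y : ℝ ↦ -y ^ 2 / 2) (-x) x :=
    ((hasDerivAt_pow 2 x).fun_neg.div_const 2).congr_deriv (by ring)
  have h2 : HasDerivAt stdNormalPDF ((√(2 * π))⁻¹ * (rexp (-x ^ 2 / 2) * -x)) x :=
    h.exp.const_mul _
  convert h2 using 1
  rw [stdNormalPDF]
  ring

lemma integrable_id_mul_stdNormalPDF : Integrable fun x ↦ x * stdNormalPDF x := by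
  have := (integrable_mul_exp_neg_mul_sq (b := 1 / 2) (by norm_num)).const_mul (√(2 * π))⁻¹
  convert this using 2 with x
  simp only [stdNormalPDF]; ring_nf

lemma tendsto_stdNormalPDF_atTop : Tendsto stdNormalPDF atTop (𝓝 0) := by
  have h : Tendsto (fun x : ℝ ↦ -x ^ 2 / 2) atTop atBot :=
    (tendsto_neg_atTop_atBot.comp (tendsto_pow_atTop two_ne_zero)).atBot_div_const two_pos
  have h2 : Tendsto stdNormalPDF atTop (𝓝 ((√(2 * π))⁻¹ * 0)) :=
    (tendsto_exp_atBot.comp h).const_mul _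
  rwa [mul_zero] at h2

lemma setIntegral_Ioi_id_gaussianReal (t : ℝ) :
    ∫ x in Ioi t, x ∂gaussianReal 0 1 = stdNormalPDF t := by
  have hFTC := integral_Ioi_of_hasDerivAt_of_tendsto' (a := t)
    (fun x _ ↦ (hasDerivAt_stdNormalPDF x).neg)
    (by simpa using integrable_id_mul_stdNormalPDF.integrableOn) tendsto_stdNormalPDF_atTop.neg
  simp only [neg_mul, neg_neg, neg_zero, zero_sub, Pi.neg_apply] at hFTC
  rw [← hFTC, ← integral_indicator measurableSet_Ioi,
    integral_gaussianReal_eq_integral_smul one_ne_zero, ← stdNormalPDF_eq_gaussianPDFReal,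
    ← integral_indicator measurableSet_Ioi]
  congr with x
  by_cases hx : x ∈ Ioi t <;> simp [hx, mul_comm]

lemma Matrix.IsHermitian.dotProduct_mulVec_comm {n : Type*} [Fintype n] {S : Matrix n n ℝ}
    (hS : S.IsHermitian) (u v : n → ℝ) : v ⬝ᵥ S *ᵥ u = u ⬝ᵥ S *ᵥ v := by
  rw [dotProduct_mulVec, dotProduct_comm, ← mulVec_transpose,
    ← conjTranspose_eq_transpose_of_trivial, hS]

namespace ProbabilityTheory

variable {Ω : Type*} [MeasurableSpace Ω] {μ : Measure Ω}

lemma integral_cond {E : Type*} [NormedAddCommGroup E] [NormedSpace ℝ E] (s : Set Ω) (f : Ω → E) :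
    ∫ ω, f ω ∂μ[|s] = (μ s).toReal⁻¹ • ∫ ω in s, f ω ∂μ := by
  rw [cond, integral_smul_measure, ENNReal.toReal_inv]

lemma HasLaw.setIntegral_preimage_self {U : Ω → ℝ} {ν : Measure ℝ} (hU : HasLaw U ν μ)
    {B : Set ℝ} (hB : MeasurableSet B) : ∫ ω in U ⁻¹' B, U ω ∂μ = ∫ x in B, x ∂ν := by
  rw [← hU.map_eq]
  exact (setIntegral_map hB aestronglyMeasurable_id hU.aemeasurable).symm

lemma IndepFun.setIntegral_preimage_eq_zero {Z T : Ω → ℝ} (hZT : IndepFun Z T μ)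
    (hZ : AEStronglyMeasurable Z μ) (hT : AEMeasurable T μ) (hZ0 : ∫ ω, Z ω ∂μ = 0)
    {B : Set ℝ} (hB : MeasurableSet B) :
    ∫ ω in T ⁻¹' B, Z ω ∂μ = 0 := by
  have hind : (T ⁻¹' B).indicator Z = fun ω ↦ Z ω * B.indicator 1 (T ω) := by
    ext ω; by_cases hω : T ω ∈ B <;> simp [hω]
  have hprod :
      ∫ ω, Z ω * B.indicator 1 (T ω) ∂μ = (∫ ω, Z ω ∂μ) * ∫ ω, B.indicator 1 (T ω) ∂μ :=
    (hZT.comp measurable_id (measurable_one.indicator hB)).integral_fun_mul_eq_mul_integral hZ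
      ((measurable_one.indicator hB).comp_aemeasurable hT).aestronglyMeasurable
  rw [← integral_indicator₀ (hT.nullMeasurableSet_preimage hB), hind, hprod, hZ0, zero_mul]

lemma HasGaussianLaw.setIntegral_preimage_eq {Y T : Ω → ℝ}
    (hYT : HasGaussianLaw (fun ω ↦ (Y ω, T ω)) μ) (hY : ∫ ω, Y ω ∂μ = 0) (hT : ∫ ω, T ω ∂μ = 0)
    (hvar : Var[T; μ] ≠ 0) {B : Set ℝ} (hB : MeasurableSet B) :
    ∫ ω in T ⁻¹' B, Y ω ∂μ = cov[Y, T; μ] / Var[T; μ] * ∫ ω in T ⁻¹' B, T ω ∂μ := by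
  have := hYT.isProbabilityMeasure
  set β := cov[Y, T; μ] / Var[T; μ]
  have hY2 : MemLp Y 2 μ := hYT.fst.memLp_two
  have hT2 : MemLp T 2 μ := hYT.snd.memLp_two
  have hYi : Integrable Y μ := hY2.integrable one_le_two
  have hTi : Integrable T μ := hT2.integrable one_le_two
  have hZT : HasGaussianLaw (fun ω ↦ (Y ω - β * T ω, T ω)) μ := by
    simpa using hYT.map_fun
      ((ContinuousLinearMap.fst ℝ ℝ ℝ - β • ContinuousLinearMap.snd ℝ ℝ ℝ).prod
        (ContinuousLinearMap.snd ℝ ℝ ℝ))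
  have hcov : cov[fun ω ↦ Y ω - β * T ω, T; μ] = 0 := by
    change cov[Y - fun ω ↦ β * T ω, T; μ] = 0
    rw [covariance_sub_left hY2 (hT2.const_mul β) hT2, covariance_const_mul_left,
      covariance_self hT2.aemeasurable, div_mul_cancel₀ _ hvar, sub_self]
  have hZ0 : ∫ ω in T ⁻¹' B, (Y ω - β * T ω) ∂μ = 0 := by
    refine (hZT.indepFun_of_covariance_eq_zero hcov).setIntegral_preimage_eq_zero
      (hY2.sub (hT2.const_mul β)).aestronglyMeasurable hT2.aemeasurable ?_ hB
    rw [integral_sub hYi (hTi.const_mul β), integral_const_mul, hY, hT, mul_zero, sub_zero]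
  calc ∫ ω in T ⁻¹' B, Y ω ∂μ = ∫ ω in T ⁻¹' B, ((Y ω - β * T ω) + β * T ω) ∂μ := by
        simp only [sub_add_cancel]
    _ = β * ∫ ω in T ⁻¹' B, T ω ∂μ := by
      rw [integral_add (f := fun ω ↦ Y ω - β * T ω) (hYi.sub (hTi.const_mul β)).restrict
        (hTi.const_mul β).restrict, hZ0, zero_add, integral_const_mul]

end ProbabilityTheory

namespace IsCenteredGaussianVector

variable {Ω : Type*} [MeasurableSpace Ω] {μ : Measure Ω} {p : ℕ} {X : Ω → Fin p → ℝ}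
  {S : Matrix (Fin p) (Fin p) ℝ}

lemma hasLaw_dotProduct (h : IsCenteredGaussianVector μ X S) (u : Fin p → ℝ) :
    HasLaw (fun ω ↦ u ⬝ᵥ X ω) (gaussianReal 0 (u ⬝ᵥ S *ᵥ u).toNNReal) μ where
  aemeasurable := by
    -- otherwise the push-forward would be `0`, which is not a probability measure
    by_contra hu
    have hmap : μ.map (fun ω ↦ u ⬝ᵥ X ω) = gaussianReal 0 (u ⬝ᵥ S *ᵥ u).toNNReal := h u
    rw [Measure.map_of_not_aemeasurable hu] at hmap
    exact IsProbabilityMeasure.ne_zero _ hmap.symm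
  map_eq := h u

lemma isProbabilityMeasure (h : IsCenteredGaussianVector μ X S) : IsProbabilityMeasure μ :=
  (h.hasLaw_dotProduct 0).isProbabilityMeasure

lemma memLp_dotProduct (h : IsCenteredGaussianVector μ X S) (u : Fin p → ℝ) :
    MemLp (fun ω ↦ u ⬝ᵥ X ω) 2 μ :=
  (h.hasLaw_dotProduct u).hasGaussianLaw.memLp_two

lemma integral_dotProduct (h : IsCenteredGaussianVector μ X S) (u : Fin p → ℝ) :
    ∫ ω, u ⬝ᵥ X ω ∂μ = 0 := by
  rw [(h.hasLaw_dotProduct u).integral_eq, integral_id_gaussianReal]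

lemma variance_dotProduct (h : IsCenteredGaussianVector μ X S) (hS : S.PosSemidef)
    (u : Fin p → ℝ) : Var[fun ω ↦ u ⬝ᵥ X ω; μ] = u ⬝ᵥ S *ᵥ u := by
  rw [(h.hasLaw_dotProduct u).variance_eq, variance_id_gaussianReal,
    Real.coe_toNNReal _ (by simpa using hS.dotProduct_mulVec_nonneg u)]

lemma covariance_dotProduct (h : IsCenteredGaussianVector μ X S) (hS : S.PosSemidef)
    (u v : Fin p → ℝ) : cov[fun ω ↦ u ⬝ᵥ X ω, fun ω ↦ v ⬝ᵥ X ω; μ] = u ⬝ᵥ S *ᵥ v := by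
  have := h.isProbabilityMeasure
  have hadd : Var[fun ω ↦ (u + v) ⬝ᵥ X ω; μ] = Var[fun ω ↦ u ⬝ᵥ X ω; μ]
      + 2 * cov[fun ω ↦ u ⬝ᵥ X ω, fun ω ↦ v ⬝ᵥ X ω; μ] + Var[fun ω ↦ v ⬝ᵥ X ω; μ] := by
    simpa only [add_dotProduct] using
      variance_fun_add (h.memLp_dotProduct u) (h.memLp_dotProduct v)
  rw [h.variance_dotProduct hS, h.variance_dotProduct hS, h.variance_dotProduct hS] at hadd
  simp only [add_dotProduct, mulVec_add, dotProduct_add, hS.1.dotProduct_mulVec_comm u v] at hadd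
  linarith

lemma hasGaussianLaw_prodMk_dotProduct (h : IsCenteredGaussianVector μ X S) (u v : Fin p → ℝ) :
    HasGaussianLaw (fun ω ↦ (u ⬝ᵥ X ω, v ⬝ᵥ X ω)) μ := by
  refine ⟨isGaussian_of_map_eq_gaussianReal fun L ↦ ?_⟩
  set w := L (1, 0) • u + L (0, 1) • v
  have hL : L ∘ (fun ω ↦ (u ⬝ᵥ X ω, v ⬝ᵥ X ω)) = fun ω ↦ w ⬝ᵥ X ω := by
    ext ω
    have hx : (u ⬝ᵥ X ω, v ⬝ᵥ X ω) = (u ⬝ᵥ X ω) • ((1 : ℝ), (0 : ℝ)) + (v ⬝ᵥ X ω) • (0, 1) := by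
      ext <;> simp
    rw [Function.comp_apply, hx, map_add, map_smul, map_smul]
    simp only [w, add_dotProduct, smul_dotProduct, smul_eq_mul]
    ring
  refine ⟨0, (w ⬝ᵥ S *ᵥ w).toNNReal, ?_⟩
  rw [AEMeasurable.map_map_of_aemeasurable L.continuous.aemeasurable
    ((h.hasLaw_dotProduct u).aemeasurable.prodMk (h.hasLaw_dotProduct v).aemeasurable), hL]
  exact h w

lemma setIntegral_preimage_dotProduct (h : IsCenteredGaussianVector μ X S) (hS : S.PosSemidef)
    {u : Fin p → ℝ} (hu : u ⬝ᵥ S *ᵥ u ≠ 0) {B : Set ℝ} (hB : MeasurableSet B) :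
    ∫ ω in (fun ω ↦ u ⬝ᵥ X ω) ⁻¹' B, X ω ∂μ =
      ((∫ ω in (fun ω ↦ u ⬝ᵥ X ω) ⁻¹' B, u ⬝ᵥ X ω ∂μ) / (u ⬝ᵥ S *ᵥ u)) • S *ᵥ u := by
  have := h.isProbabilityMeasure
  have hcoord (j : Fin p) : (fun ω ↦ X ω j) = fun ω ↦ Pi.single j 1 ⬝ᵥ X ω := by
    simp [single_dotProduct]
  ext i
  rw [eval_integral fun j ↦ hcoord j ▸ ((h.memLp_dotProduct _).integrable one_le_two).restrict,
    hcoord i, (h.hasGaussianLaw_prodMk_dotProduct _ u).setIntegral_preimage_eq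
      (h.integral_dotProduct _) (h.integral_dotProduct u) (by rwa [h.variance_dotProduct hS]) hB,
    h.covariance_dotProduct hS, h.variance_dotProduct hS, single_dotProduct, one_mul,
    Pi.smul_apply, smul_eq_mul]
  ring

end IsCenteredGaussianVector

theorem gaussian_conditional_mean_linear_threshold_general
    {Ω : Type*} [MeasurableSpace Ω] (μ : Measure Ω)
    (p : ℕ) (X : Ω → Fin p → ℝ)
    (S : Matrix (Fin p) (Fin p) ℝ) (hS : S.PosDef)
    (hGauss : IsCenteredGaussianVector μ X S)
    (c : Fin p → ℝ) (hc : c ≠ 0) (s : ℝ)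
    (γ : ℝ) (hγ : γ = Real.sqrt (c ⬝ᵥ S.mulVec c)) :
    μ {ω | s < ∑ i, c i * X ω i} = ENNReal.ofReal (1 - stdNormalCDF (s / γ)) ∧
    0 < 1 - stdNormalCDF (s / γ) ∧
    ∫ ω, X ω ∂(μ[|{ω | s < ∑ i, c i * X ω i}])
      = (stdNormalPDF (s / γ) / ((1 - stdNormalCDF (s / γ)) * γ)) • S.mulVec c := by
  have hγ_pos : 0 < γ := hγ ▸ Real.sqrt_pos.mpr (by simpa using hS.dotProduct_mulVec_pos hc)
  have hγ_sq : c ⬝ᵥ S *ᵥ c = γ ^ 2 := by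
    rw [hγ, Real.sq_sqrt (by simpa using hS.posSemidef.dotProduct_mulVec_nonneg c)]
  set w := γ⁻¹ • c
  have hw : w ⬝ᵥ S *ᵥ w = 1 := by
    simp only [w, mulVec_smul, smul_dotProduct, dotProduct_smul, hγ_sq, smul_eq_mul]
    field_simp
  have hU : HasLaw (fun ω ↦ w ⬝ᵥ X ω) (gaussianReal 0 1) μ := by
    simpa [hw] using hGauss.hasLaw_dotProduct w
  have hA : {ω | s < ∑ i, c i * X ω i} = (fun ω ↦ w ⬝ᵥ X ω) ⁻¹' Ioi (s / γ) := by
    ext ω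
    change s < c ⬝ᵥ X ω ↔ s / γ < w ⬝ᵥ X ω
    rw [div_lt_iff₀' hγ_pos, smul_dotProduct, smul_eq_mul, mul_inv_cancel_left₀ hγ_pos.ne']
  have hμA : μ {ω | s < ∑ i, c i * X ω i} = ENNReal.ofReal (1 - stdNormalCDF (s / γ)) := by
    rw [hA, ← gaussianReal_Ioi, ← hU.map_eq, Measure.map_apply_of_aemeasurable hU.aemeasurable
      measurableSet_Ioi]
  refine ⟨hμA, one_sub_stdNormalCDF_pos _, ?_⟩
  rw [integral_cond, hμA, ENNReal.toReal_ofReal (one_sub_stdNormalCDF_pos _).le, hA,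
    hGauss.setIntegral_preimage_dotProduct hS.posSemidef (by rw [hw]; exact one_ne_zero)
      measurableSet_Ioi, hw, div_one, hU.setIntegral_preimage_self measurableSet_Ioi,
    setIntegral_Ioi_id_gaussianReal, mulVec_smul, smul_smul, smul_smul]
  congr 1
  field_simp

/-- conditional mean of a Gaussian vector given a linear threshold.
For `X ~ N(0, Σ)` with `Σ` positive definite, nonzero `c`, `γ = (cᵀ Σ c)^{1/2}`,
`P(cᵀX > s) = 1 - Φ(s/γ) > 0` and
`E[X | cᵀX > s] = φ(s/γ) / ((1 - Φ(s/γ)) γ) · Σ c`. -/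
theorem gaussian_conditional_mean_linear_threshold
    {Ω : Type*} [MeasurableSpace Ω] (μ : Measure Ω) [IsProbabilityMeasure μ]
    (p : ℕ) (X : Ω → Fin p → ℝ) (hX : Measurable X)
    (S : Matrix (Fin p) (Fin p) ℝ) (hS : S.PosDef)
    (hGauss : IsCenteredGaussianVector μ X S)
    (c : Fin p → ℝ) (hc : c ≠ 0) (s : ℝ)
    (γ : ℝ) (hγ : γ = Real.sqrt (c ⬝ᵥ S.mulVec c)) :
    μ {ω | s < ∑ i, c i * X ω i} = ENNReal.ofReal (1 - stdNormalCDF (s / γ)) ∧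
    0 < 1 - stdNormalCDF (s / γ) ∧
    ∫ ω, X ω ∂(μ[|{ω | s < ∑ i, c i * X ω i}])
      = (stdNormalPDF (s / γ) / ((1 - stdNormalCDF (s / γ)) * γ)) • S.mulVec c :=
  gaussian_conditional_mean_linear_threshold_general μ p X S hS hGauss c hc s γ hγ
end

section
/- (The propensity score is a balancing score.) Let (Ω, ℱ, P) be a probability space with ℱ standard Borel as needed, let X : Ω → ℝ^p be a random vector, T : Ω → {0, 1} a random variable, and π : ℝ^p → [0, 1] a measurable function such that E[T | σ(X)] = π(X) almost surely. Then X and T are conditionally independent given the σ-algebra σ(π(X)), i.e., for every bounded measurable f : ℝ^p → ℝ, E[T f(X) | σ(π(X))] = E[T | σ(π(X))] · E[f(X) | σ(π(X))] almost surely. -/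
open MeasureTheory ProbabilityTheory

/-- the propensity score is a balancing score, Rosenbaum–Rubin.
If `π` is measurable with `E[T | σ(X)] = π(X)` a.s., then `X` and `T` are
conditionally independent given `σ(π(X))`: for every bounded measurable `f`,
`E[T f(X) | σ(π(X))] = E[T | σ(π(X))] E[f(X) | σ(π(X))]` a.s. -/
theorem propensity_score_is_balancing_score
    {Ω : Type*} [MeasurableSpace Ω] (μ : Measure Ω) [IsProbabilityMeasure μ]
    (p : ℕ) (X : Ω → Fin p → ℝ) (T : Ω → ℝ)
    (hX : Measurable X) (hT : Measurable T)
    (hT01 : ∀ ω, T ω = 0 ∨ T ω = 1)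
    (π : (Fin p → ℝ) → ℝ) (hπ : Measurable π)
    (hπ01 : ∀ v, π v ∈ Set.Icc (0 : ℝ) 1)
    (hprop : μ[T | MeasurableSpace.comap X inferInstance] =ᵐ[μ] fun ω => π (X ω)) :
    ∀ f : (Fin p → ℝ) → ℝ, Measurable f → (∃ Cb : ℝ, ∀ v, |f v| ≤ Cb) →
      μ[fun ω => T ω * f (X ω) |
          MeasurableSpace.comap (fun ω => π (X ω)) inferInstance]
        =ᵐ[μ]
      fun ω =>
        (μ[T | MeasurableSpace.comap (fun ω => π (X ω)) inferInstance]) ω *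
        (μ[fun ω => f (X ω) |
            MeasurableSpace.comap (fun ω => π (X ω)) inferInstance]) ω := by
  intro f hf ⟨Cb, hCb⟩
  have hmX : MeasurableSpace.comap X inferInstance ≤ ‹MeasurableSpace Ω› := hX.comap_le
  have hm_le : MeasurableSpace.comap (fun ω => π (X ω)) inferInstance ≤
      MeasurableSpace.comap X inferInstance := by
    have : (fun ω => π (X ω)) = π ∘ X := rfl
    rw [this, ← MeasurableSpace.comap_comp]
    exact MeasurableSpace.comap_mono hπ.comap_le
  have hm : MeasurableSpace.comap (fun ω => π (X ω)) inferInstance ≤ ‹MeasurableSpace Ω› :=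
    hm_le.trans hmX
  -- boundedness / integrability facts
  have hTb : ∀ ω, |T ω| ≤ 1 := by
    intro ω; rcases hT01 ω with h | h <;> simp [h]
  have hInt_of_bound : ∀ (g : Ω → ℝ), Measurable g → ∀ C : ℝ, (∀ ω, |g ω| ≤ C) →
      Integrable g μ := by
    intro g hg C hC
    exact (integrable_const C).mono' hg.aestronglyMeasurable (Filter.Eventually.of_forall hC)
  have hT_int : Integrable T μ := hInt_of_bound T hT 1 hTb
  have hfX_meas : Measurable (fun ω => f (X ω)) := hf.comp hX
  have hfX_int : Integrable (fun ω => f (X ω)) μ :=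
    hInt_of_bound _ hfX_meas Cb (fun ω => hCb _)
  have hπX_meas : Measurable (fun ω => π (X ω)) := hπ.comp hX
  have hπXb : ∀ ω, |π (X ω)| ≤ 1 := by
    intro ω
    rcases hπ01 (X ω) with ⟨h0, h1⟩
    rw [abs_le]; constructor <;> linarith
  have hπX_int : Integrable (fun ω => π (X ω)) μ := hInt_of_bound _ hπX_meas 1 hπXb
  -- strong measurability wrt sub-σ-algebras
  have hfX_smX : StronglyMeasurable[MeasurableSpace.comap X inferInstance]
      (fun ω => f (X ω)) := (hf.comp (comap_measurable X)).stronglyMeasurable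
  have hπX_sm : StronglyMeasurable[MeasurableSpace.comap (fun ω => π (X ω)) inferInstance]
      (fun ω => π (X ω)) := (comap_measurable (fun ω => π (X ω))).stronglyMeasurable
  -- Step A : E[T|m] = π∘X a.e.
  have stepA : μ[T|MeasurableSpace.comap (fun ω => π (X ω)) inferInstance]
      =ᵐ[μ] fun ω => π (X ω) := by
    calc μ[T|MeasurableSpace.comap (fun ω => π (X ω)) inferInstance]
        =ᵐ[μ] μ[μ[T|MeasurableSpace.comap X inferInstance]|
            MeasurableSpace.comap (fun ω => π (X ω)) inferInstance] :=
          (condExp_condExp_of_le hm_le hmX).symm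
      _ =ᵐ[μ] μ[(fun ω => π (X ω))|
            MeasurableSpace.comap (fun ω => π (X ω)) inferInstance] :=
          condExp_congr_ae hprop
      _ =ᵐ[μ] fun ω => π (X ω) := by
          rw [condExp_of_stronglyMeasurable hm hπX_sm hπX_int]
  -- Step B : E[T f(X) | mX] = f(X) π(X) a.e.
  have stepB : μ[(fun ω => T ω * f (X ω))|MeasurableSpace.comap X inferInstance]
      =ᵐ[μ] fun ω => f (X ω) * π (X ω) := by
    have h1 : μ[(fun ω => T ω * f (X ω))|MeasurableSpace.comap X inferInstance]
        =ᵐ[μ] μ[(fun ω => f (X ω)) * T|MeasurableSpace.comap X inferInstance] :=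
      condExp_congr_ae (Filter.Eventually.of_forall fun ω => mul_comm _ _)
    have h2 : μ[(fun ω => f (X ω)) * T|MeasurableSpace.comap X inferInstance]
        =ᵐ[μ] (fun ω => f (X ω)) * μ[T|MeasurableSpace.comap X inferInstance] :=
      condExp_stronglyMeasurable_mul_of_bound hmX hfX_smX hT_int Cb
        (Filter.Eventually.of_forall fun ω => hCb _)
    refine (h1.trans h2).trans ?_
    filter_upwards [hprop] with ω hω
    simp only [Pi.mul_apply]
    rw [hω]
  -- Step C : main computation
  have stepC : μ[(fun ω => T ω * f (X ω))|
        MeasurableSpace.comap (fun ω => π (X ω)) inferInstance]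
      =ᵐ[μ] (fun ω => π (X ω)) *
        μ[(fun ω => f (X ω))|MeasurableSpace.comap (fun ω => π (X ω)) inferInstance] := by
    calc μ[(fun ω => T ω * f (X ω))|
          MeasurableSpace.comap (fun ω => π (X ω)) inferInstance]
        =ᵐ[μ] μ[μ[(fun ω => T ω * f (X ω))|MeasurableSpace.comap X inferInstance]|
            MeasurableSpace.comap (fun ω => π (X ω)) inferInstance] :=
          (condExp_condExp_of_le hm_le hmX).symm
      _ =ᵐ[μ] μ[(fun ω => f (X ω) * π (X ω))|
            MeasurableSpace.comap (fun ω => π (X ω)) inferInstance] :=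
          condExp_congr_ae stepB
      _ =ᵐ[μ] μ[(fun ω => π (X ω)) * (fun ω => f (X ω))|
            MeasurableSpace.comap (fun ω => π (X ω)) inferInstance] :=
          condExp_congr_ae (Filter.Eventually.of_forall fun ω => mul_comm _ _)
      _ =ᵐ[μ] (fun ω => π (X ω)) *
            μ[(fun ω => f (X ω))|MeasurableSpace.comap (fun ω => π (X ω)) inferInstance] :=
          condExp_stronglyMeasurable_mul_of_bound hm hπX_sm hfX_int 1
            (Filter.Eventually.of_forall fun ω => hπXb ω)
  refine stepC.trans ?_
  filter_upwards [stepA] with ω hω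
  simp only [Pi.mul_apply]
  rw [hω]
end

section
/- (Unconfoundedness transfers to the propensity score.) Let (Ω, ℱ, P) be a probability space, X : Ω → ℝ^p a random vector, T : Ω → {0, 1} a random variable, π : ℝ^p → [0, 1] measurable with E[T | σ(X)] = π(X) almost surely, and let Y(1), Y(0) be integrable real random variables (the potential outcomes). Assume unconfoundedness given X: the pair (Y(1), Y(0)) and T are conditionally independent given σ(X). Then (Y(1), Y(0)) and T are conditionally independent given σ(π(X)). -/
open MeasureTheory ProbabilityTheory

/-! Since `T` is `{0,1}`-valued, `g(T) = g 0 + (g 1 - g 0) T`, so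
`E[g(T) | σ(X)] = g 0 + (g 1 - g 0) π(X)` is already `σ(π(X))`-measurable. Conditional
independence then descends from `σ(X)` to the coarser `σ(π(X))` by the tower property and
pulling this factor out. -/

section CondExp

variable {Ω : Type*} {m₁ m₂ m : MeasurableSpace Ω} {μ : Measure[m] Ω}

theorem condExp_mul_ae_eq_mul_condExp_of_le [IsFiniteMeasure μ] {F G : Ω → ℝ}
    (h₁₂ : m₁ ≤ m₂) (h₂ : m₂ ≤ m) (hG : AEStronglyMeasurable[m₁] (μ[G|m₂]) μ)
    (hFG : μ[F * G|m₂] =ᵐ[μ] μ[F|m₂] * μ[G|m₂]) :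
    μ[F * G|m₁] =ᵐ[μ] μ[F|m₁] * μ[G|m₁] := by
  have hG₁ : μ[G|m₁] =ᵐ[μ] μ[G|m₂] :=
    (condExp_condExp_of_le h₁₂ h₂).symm.trans
      (condExp_of_aestronglyMeasurable' (h₁₂.trans h₂) hG integrable_condExp)
  have hGF : μ[F * G|m₂] =ᵐ[μ] μ[G|m₂] * μ[F|m₂] := by rwa [mul_comm (μ[G|m₂])]
  calc μ[F * G|m₁] =ᵐ[μ] μ[μ[F * G|m₂]|m₁] := (condExp_condExp_of_le h₁₂ h₂).symm
    _ =ᵐ[μ] μ[μ[G|m₂] * μ[F|m₂]|m₁] := condExp_congr_ae hGF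
    _ =ᵐ[μ] μ[G|m₂] * μ[μ[F|m₂]|m₁] := condExp_mul_of_aestronglyMeasurable_left hG
        (integrable_condExp.congr hGF) integrable_condExp
    _ =ᵐ[μ] μ[G|m₁] * μ[F|m₁] := hG₁.symm.mul (condExp_condExp_of_le h₁₂ h₂)
    _ = μ[F|m₁] * μ[G|m₁] := mul_comm _ _

theorem condExp_comp_ae_eq_of_zero_or_one [IsFiniteMeasure μ] (hm : m₁ ≤ m) {T : Ω → ℝ}
    (hT : AEStronglyMeasurable T μ) (hT01 : ∀ ω, T ω = 0 ∨ T ω = 1) (g : ℝ → ℝ) :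
    μ[fun ω => g (T ω)|m₁] =ᵐ[μ] fun ω => g 0 + (g 1 - g 0) * μ[T|m₁] ω := by
  have hT_int : Integrable T μ :=
    .of_bound hT 1 (ae_of_all μ fun ω => by
      rcases hT01 ω with h | h <;> simp [h])
  have hg_affine : (fun ω => g (T ω)) = (fun _ => g 0) + (g 1 - g 0) • T := by
    funext ω
    rcases hT01 ω with h | h <;> simp [h]
  rw [hg_affine]
  filter_upwards [condExp_add (integrable_const (g 0)) (hT_int.smul (g 1 - g 0)) m₁,
    condExp_smul (g 1 - g 0) T m₁] with ω h_add h_smul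
  simp [h_add, h_smul, condExp_const hm]

end CondExp

theorem unconfoundedness_transfers_to_propensity_score_general
    {Ω : Type*} [MeasurableSpace Ω] (μ : Measure Ω) [IsProbabilityMeasure μ]
    (p : ℕ) (X : Ω → Fin p → ℝ) (T : Ω → ℝ) (Y1 Y0 : Ω → ℝ)
    (hX : Measurable X) (hT : Measurable T)
    (hT01 : ∀ ω, T ω = 0 ∨ T ω = 1)
    (π : (Fin p → ℝ) → ℝ) (hπ : Measurable π)
    (hprop : μ[T | MeasurableSpace.comap X inferInstance] =ᵐ[μ] fun ω => π (X ω))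
    (hunconf : ∀ (f : ℝ × ℝ → ℝ) (g : ℝ → ℝ), Measurable f → Measurable g →
      (∃ Cf : ℝ, ∀ v, |f v| ≤ Cf) → (∃ Cg : ℝ, ∀ v, |g v| ≤ Cg) →
      μ[fun ω => f (Y1 ω, Y0 ω) * g (T ω) | MeasurableSpace.comap X inferInstance]
        =ᵐ[μ]
      fun ω =>
        (μ[fun ω => f (Y1 ω, Y0 ω) | MeasurableSpace.comap X inferInstance]) ω *
        (μ[fun ω => g (T ω) | MeasurableSpace.comap X inferInstance]) ω) :
    ∀ (f : ℝ × ℝ → ℝ) (g : ℝ → ℝ), Measurable f → Measurable g →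
      (∃ Cf : ℝ, ∀ v, |f v| ≤ Cf) → (∃ Cg : ℝ, ∀ v, |g v| ≤ Cg) →
      μ[fun ω => f (Y1 ω, Y0 ω) * g (T ω) |
          MeasurableSpace.comap (fun ω => π (X ω)) inferInstance]
        =ᵐ[μ]
      fun ω =>
        (μ[fun ω => f (Y1 ω, Y0 ω) |
            MeasurableSpace.comap (fun ω => π (X ω)) inferInstance]) ω *
        (μ[fun ω => g (T ω) |
            MeasurableSpace.comap (fun ω => π (X ω)) inferInstance]) ω := by
  intro f g hf hg hfb hgb
  have hσX : MeasurableSpace.comap X inferInstance ≤ ‹MeasurableSpace Ω› := hX.comap_le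
  have hσπX : MeasurableSpace.comap (fun ω => π (X ω)) inferInstance
      ≤ MeasurableSpace.comap X inferInstance := by
    rw [show (fun ω => π (X ω)) = π ∘ X from rfl, ← MeasurableSpace.comap_comp]
    exact MeasurableSpace.comap_mono hπ.comap_le
  have hπX : Measurable[MeasurableSpace.comap (fun ω => π (X ω)) inferInstance]
      fun ω => π (X ω) := comap_measurable _
  refine condExp_mul_ae_eq_mul_condExp_of_le hσπX hσX ?_ (hunconf f g hf hg hfb hgb)
  refine ⟨fun ω => g 0 + (g 1 - g 0) * π (X ω),
    (measurable_const.add (measurable_const.mul hπX)).stronglyMeasurable, ?_⟩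
  filter_upwards [condExp_comp_ae_eq_of_zero_or_one hσX hT.aestronglyMeasurable hT01 g, hprop]
    with ω hω hπω
  rw [hω, hπω]

/-- unconfoundedness transfers to the propensity score.
If `E[T | σ(X)] = π(X)` a.s. and the potential outcomes `(Y(1), Y(0))` are
conditionally independent of `T` given `σ(X)` (in the sense that, for all bounded
measurable `f, g`, `E[f(Y(1),Y(0)) g(T) | σ(X)] = E[f(Y(1),Y(0)) | σ(X)] E[g(T) | σ(X)]`
a.s.), then `(Y(1), Y(0))` and `T` are conditionally independent given `σ(π(X))`. -/
theorem unconfoundedness_transfers_to_propensity_score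
    {Ω : Type*} [MeasurableSpace Ω] (μ : Measure Ω) [IsProbabilityMeasure μ]
    (p : ℕ) (X : Ω → Fin p → ℝ) (T : Ω → ℝ) (Y1 Y0 : Ω → ℝ)
    (hX : Measurable X) (hT : Measurable T)
    (hY1 : Measurable Y1) (hY0 : Measurable Y0)
    (hT01 : ∀ ω, T ω = 0 ∨ T ω = 1)
    (hY1int : Integrable Y1 μ) (hY0int : Integrable Y0 μ)
    (π : (Fin p → ℝ) → ℝ) (hπ : Measurable π)
    (hπ01 : ∀ v, π v ∈ Set.Icc (0 : ℝ) 1)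
    (hprop : μ[T | MeasurableSpace.comap X inferInstance] =ᵐ[μ] fun ω => π (X ω))
    (hunconf : ∀ (f : ℝ × ℝ → ℝ) (g : ℝ → ℝ), Measurable f → Measurable g →
      (∃ Cf : ℝ, ∀ v, |f v| ≤ Cf) → (∃ Cg : ℝ, ∀ v, |g v| ≤ Cg) →
      μ[fun ω => f (Y1 ω, Y0 ω) * g (T ω) | MeasurableSpace.comap X inferInstance]
        =ᵐ[μ]
      fun ω =>
        (μ[fun ω => f (Y1 ω, Y0 ω) | MeasurableSpace.comap X inferInstance]) ω *
        (μ[fun ω => g (T ω) | MeasurableSpace.comap X inferInstance]) ω) :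
    ∀ (f : ℝ × ℝ → ℝ) (g : ℝ → ℝ), Measurable f → Measurable g →
      (∃ Cf : ℝ, ∀ v, |f v| ≤ Cf) → (∃ Cg : ℝ, ∀ v, |g v| ≤ Cg) →
      μ[fun ω => f (Y1 ω, Y0 ω) * g (T ω) |
          MeasurableSpace.comap (fun ω => π (X ω)) inferInstance]
        =ᵐ[μ]
      fun ω =>
        (μ[fun ω => f (Y1 ω, Y0 ω) |
            MeasurableSpace.comap (fun ω => π (X ω)) inferInstance]) ω *
        (μ[fun ω => g (T ω) |
            MeasurableSpace.comap (fun ω => π (X ω)) inferInstance]) ω :=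
  unconfoundedness_transfers_to_propensity_score_general μ p X T Y1 Y0 hX hT hT01 π hπ hprop hunconf
end
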